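/- arXiv:2006.06736 — 2 statements merged into one kernel-verified Lean document; each statement's English description precedes it below -/
import Mathlib

section
/- Let A be a unital complex Banach algebra and a, b, c ∈ A satisfy aba = aca. Then for every λ ∈ ℂ, λ - ba has a generalized Drazin inverse if and only if λ - ac has a generalized Drazin inverse. -/
def IsQuasinilpotent {A : Type*} [Ring A] (q : A) : Prop :=
  ∀ y : A, q * y = y * q → IsUnit (1 + q * y)

def IsGDrazinInverse {A : Type*} [Ring A] (a x : A) : Prop :=
  x = x * a * x ∧ a * x = x * a ∧ IsQuasinilpotent (a - a * a * x)

/-!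
Quasinilpotence is the ring-theoretic notion above, so everything is ring theory. Scaling by
`λ⁻¹` (by `-1` when `λ = 0`) reduces the claim to `1 - b a` versus `1 - a c` and to `b a` versus
`a c`, and in each case the implication from `a c` to `b a` suffices, applied along
`b a ⇒ a b ⇒ c a ⇒ a c`.

If `x` is the gDrazin inverse of `a c`, then `b x² a` is that of `b a` (Cline's formula). If `x`
is the gDrazin inverse of `1 - a c` and `s` inverts `a c` in the corner of the spectral idempotent
`p = 1 - (1 - a c) x`, then `1 + b (x - s) a` is that of `1 - b a` (Jacobson's lemma). In both
cases the quasinilpotent part is `b a'` with `a' b a' = a' c a'` and `a' c` quasinilpotent, and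
quasinilpotence passes from `a' c` to `b a'` since `(b a' y)³ = b (a' c) (a' c a' y³)`.
-/

section

variable {A : Type*} [Ring A]

theorem isUnit_one_add_mul_comm {x y : A} (h : IsUnit (1 + x * y)) : IsUnit (1 + y * x) := by
  have key := spectrum.unit_mem_mul_comm (R := ℤ) (r := -1) (a := x) (b := y)
  simp only [spectrum.mem_iff, Units.val_neg, Units.val_one, map_neg, map_one, ← neg_add',
    IsUnit.neg_iff, not_iff_not] at key
  exact key.mp h

namespace IsQuasinilpotent

theorem isUnit_one_sub {q : A} (hq : IsQuasinilpotent q) : IsUnit (1 - q) := by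
  simpa [sub_eq_add_neg] using hq (-1) (by simp)

theorem smul {R : Type*} [CommSemiring R] [Algebra R A] (r : R) {q : A}
    (hq : IsQuasinilpotent q) : IsQuasinilpotent (r • q) := by
  intro y hy
  have hcomm : q * (r • y) = r • y * q := by
    rw [mul_smul_comm, ← smul_mul_assoc, hy, mul_smul_comm, smul_mul_assoc]
  simpa [smul_mul_assoc, mul_smul_comm] using hq _ hcomm

theorem mul_of_mul_mul_eq {a b c : A} (h : a * b * a = a * c * a)
    (hac : IsQuasinilpotent (a * c)) : IsQuasinilpotent (b * a) := by
  intro y hy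
  have hcomm : Commute (b * a) y := hy
  have hcube : (b * a * y) ^ 3 = b * (a * c) * (a * c * a * y ^ 3) :=
    calc (b * a * y) ^ 3 = b * (a * b * a) * (b * a) * y ^ 3 := by
          rw [hcomm.mul_pow]; noncomm_ring
      _ = b * (a * c * a) * (b * a) * y ^ 3 := by rw [h]
      _ = b * a * c * (a * b * a) * y ^ 3 := by noncomm_ring
      _ = b * a * c * (a * c * a) * y ^ 3 := by rw [h]
      _ = b * (a * c) * (a * c * a * y ^ 3) := by noncomm_ring
  have hz : a * c * (a * y ^ 3 * b * (a * c)) = a * y ^ 3 * b * (a * c) * (a * c) :=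
    calc a * c * (a * y ^ 3 * b * (a * c)) = a * c * a * y ^ 3 * b * (a * c) := by noncomm_ring
      _ = a * b * a * y ^ 3 * b * (a * c) := by rw [h]
      _ = a * (b * a * y ^ 3) * b * (a * c) := by noncomm_ring
      _ = a * (y ^ 3 * (b * a)) * b * (a * c) := by rw [(hcomm.pow_right 3).eq]
      _ = a * y ^ 3 * b * (a * b * a) * c := by noncomm_ring
      _ = a * y ^ 3 * b * (a * c * a) * c := by rw [h]
      _ = a * y ^ 3 * b * (a * c) * (a * c) := by noncomm_ring
  have hunit : IsUnit (1 + (b * a * y) ^ 3) := by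
    rw [hcube]
    apply isUnit_one_add_mul_comm
    simpa only [mul_assoc] using hac _ hz
  have hfactor : Commute (1 + b * a * y) (1 - b * a * y + (b * a * y) ^ 2) := by
    unfold Commute SemiconjBy; noncomm_ring
  have hprod : (1 + b * a * y) * (1 - b * a * y + (b * a * y) ^ 2) = 1 + (b * a * y) ^ 3 := by
    noncomm_ring
  exact (hfactor.isUnit_mul_iff.mp (hprod ▸ hunit)).1

theorem mul_mul_of_mul_mul_mul_eq {a b c e : A}
    (h : a * b * e * a = a * c * e * a) (hq : IsQuasinilpotent (e * a * c)) :
    IsQuasinilpotent (b * e * a) := by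
  rw [mul_assoc]
  refine mul_of_mul_mul_eq (c := c) ?_ hq
  calc e * a * b * (e * a) = e * (a * b * e * a) := by noncomm_ring
    _ = e * a * c * (e * a) := by rw [h]; noncomm_ring

end IsQuasinilpotent

namespace IsGDrazinInverse

variable {u x : A}

theorem one_sub_mul_mul_eq_zero (hx : IsGDrazinInverse u x) : (1 - u * x) * x = 0 := by
  rw [sub_mul, one_mul, hx.2.1, ← hx.1, sub_self]

theorem isIdempotentElem_one_sub_mul (hx : IsGDrazinInverse u x) :
    IsIdempotentElem (1 - u * x) :=
  calc (1 - u * x) * (1 - u * x) = (1 - u * x) - (1 - u * x) * x * u := by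
        rw [mul_assoc _ x u, ← hx.2.1]; noncomm_ring
    _ = 1 - u * x := by rw [hx.one_sub_mul_mul_eq_zero, zero_mul, sub_zero]

theorem exists_corner_inverse_one_sub (hx : IsGDrazinInverse u x) :
    ∃ s, (1 - u * x) * s = s ∧ s * x = 0 ∧ s * (1 - u) = 1 - u * x ∧
      (1 - u) * s = 1 - u * x := by
  set p := 1 - u * x with hp
  have hpp : p * p = p := hx.isIdempotentElem_one_sub_mul
  have hup : Commute u p := (Commute.one_right u).sub_right ((Commute.refl u).mul_right hx.2.1)
  have hvp : Commute (1 - u) p := (Commute.one_left p).sub_left hup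
  obtain ⟨r, hr⟩ := hx.2.2.isUnit_one_sub
  have hr' : (r : A) = 1 - u * p := by rw [hr, hp]; noncomm_ring
  have hpr : p * (1 - u) = p * r := by
    rw [hr', mul_sub, mul_sub, ← mul_assoc, ← hup.eq, mul_assoc, hpp]
  have hpr' : Commute p (r⁻¹ : Aˣ) := by
    refine Commute.units_inv_right ?_
    rw [hr']
    exact (Commute.one_right p).sub_right (hup.symm.mul_right (Commute.refl p))
  have hvr' : Commute (1 - u) (r⁻¹ : Aˣ) := by
    refine Commute.units_inv_right ?_
    rw [hr']
    exact (Commute.one_left _).sub_left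
      ((Commute.one_right u).sub_right ((Commute.refl u).mul_right hup))
  have hcorner : p * (1 - u) * (r⁻¹ : Aˣ) = p := by rw [hpr, mul_assoc, Units.mul_inv, mul_one]
  refine ⟨p * (r⁻¹ : Aˣ), ?_, ?_, ?_, ?_⟩
  · rw [← mul_assoc, hpp]
  · rw [hpr'.eq, mul_assoc, hx.one_sub_mul_mul_eq_zero, mul_zero]
  · rw [mul_assoc, ← hvr'.eq, ← mul_assoc, hcorner]
  · rw [← mul_assoc, hvp.eq, hcorner]

theorem smul {K : Type*} [Field K] [Algebra K A] {l : K} (hl : l ≠ 0)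
    (hx : IsGDrazinInverse u x) : IsGDrazinInverse (l • u) (l⁻¹ • x) := by
  obtain ⟨hxux, hcomm, hq⟩ := hx
  refine ⟨?_, ?_, ?_⟩
  · rw [smul_mul_smul_comm, smul_mul_smul_comm, inv_mul_cancel₀ hl, one_mul, ← hxux]
  · rw [smul_mul_smul_comm, smul_mul_smul_comm, mul_inv_cancel₀ hl, inv_mul_cancel₀ hl, hcomm]
  · rw [smul_mul_smul_comm, smul_mul_smul_comm, mul_inv_cancel_right₀ hl, ← smul_sub]
    exact hq.smul l

variable {a b c : A}

theorem mul_of_mul_mul_eq (h : a * b * a = a * c * a) (hx : IsGDrazinInverse (a * c) x) :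
    IsGDrazinInverse (b * a) (b * (x * x) * a) := by
  obtain ⟨hxvx, hcomm, hq⟩ := hx
  have habv : a * b * (a * c) = a * c * (a * c) := by rw [← mul_assoc, h]; noncomm_ring
  have hvxx : a * c * (x * x) = x := by rw [← mul_assoc, hcomm, ← hxvx]
  have hxxv : x * x * (a * c) = x := by rw [mul_assoc, ← hcomm, ← mul_assoc, ← hxvx]
  have habx : a * b * x = a * c * x :=
    calc a * b * x = a * b * (a * c) * (x * x) := by rw [mul_assoc _ (a * c), hvxx]
      _ = a * c * x := by rw [habv, mul_assoc, hvxx]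
  have hyba : b * (x * x) * a * (b * a) = b * x * a :=
    calc b * (x * x) * a * (b * a) = b * (x * x) * (a * b * a) := by noncomm_ring
      _ = b * (x * x * (a * c)) * a := by rw [h]; noncomm_ring
      _ = b * x * a := by rw [hxxv]
  have hbay : b * a * (b * (x * x) * a) = b * x * a :=
    calc b * a * (b * (x * x) * a) = b * (a * b * x) * x * a := by noncomm_ring
      _ = b * (a * c * (x * x)) * a := by rw [habx]; noncomm_ring
      _ = b * x * a := by rw [hvxx]
  refine ⟨?_, hbay.trans hyba.symm, ?_⟩
  · symm
    calc b * (x * x) * a * (b * a) * (b * (x * x) * a) = b * x * (a * b * x) * x * a := by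
          rw [hyba]; noncomm_ring
      _ = b * (x * (a * c) * x) * x * a := by rw [habx]; noncomm_ring
      _ = b * (x * x) * a := by rw [← hxvx]; noncomm_ring
  · have hw : b * a - b * a * (b * a) * (b * (x * x) * a) = b * (1 - a * c * x) * a :=
      calc b * a - b * a * (b * a) * (b * (x * x) * a) = b * a - b * (a * b * x) * a := by
            rw [mul_assoc (b * a) (b * a), hbay]; noncomm_ring
        _ = b * (1 - a * c * x) * a := by rw [habx]; noncomm_ring
    rw [hw]
    refine IsQuasinilpotent.mul_mul_of_mul_mul_mul_eq (c := c) ?_ ?_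
    · calc a * b * (1 - a * c * x) * a = a * b * a - a * b * (a * c) * x * a := by noncomm_ring
        _ = a * c * (1 - a * c * x) * a := by rw [h, habv]; noncomm_ring
    · convert hq using 1
      calc (1 - a * c * x) * a * c = a * c - a * c * (x * (a * c)) := by noncomm_ring
        _ = a * c - a * c * (a * c) * x := by rw [← hcomm]; noncomm_ring

theorem mul_mul_one_sub_mul_eq (h : a * b * a = a * c * a)
    (hx : IsGDrazinInverse (1 - a * c) x) :
    a * b * (1 - (1 - a * c) * x) = a * c * (1 - (1 - a * c) * x) := by
  obtain ⟨s, -, -, -, hvs⟩ := hx.exists_corner_inverse_one_sub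
  rw [sub_sub_cancel] at hvs
  simp only [← hvs, ← mul_assoc, h]

theorem mul_mul_mul_eq (h : a * b * a = a * c * a) (hx : IsGDrazinInverse (1 - a * c) x) :
    a * b * x * a = a * c * x * a := by
  have hDv : (a * b - a * c) * (a * c) = 0 := by
    simp only [sub_mul, ← mul_assoc, h, sub_self, zero_mul]
  have hD : (a * b - a * c) * x = a * b - a * c :=
    calc (a * b - a * c) * x = (a * b - a * c) * (1 - a * c) * x := by
          rw [mul_sub, mul_one, hDv, sub_zero]
      _ = a * b - a * c - (a * b * (1 - (1 - a * c) * x) - a * c * (1 - (1 - a * c) * x)) := by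
          noncomm_ring
      _ = a * b - a * c := by rw [hx.mul_mul_one_sub_mul_eq h, sub_self, sub_zero]
  calc a * b * x * a = a * c * x * a + (a * b - a * c) * x * a := by noncomm_ring
    _ = a * c * x * a := by rw [hD, sub_mul, h, sub_self, add_zero]

theorem one_sub_mul_of_mul_mul_eq (h : a * b * a = a * c * a)
    (hx : IsGDrazinInverse (1 - a * c) x) : ∃ y, IsGDrazinInverse (1 - b * a) y := by
  obtain ⟨s, hps, hsx, hsv, hvs⟩ := hx.exists_corner_inverse_one_sub
  rw [sub_sub_cancel] at hsv hvs
  have hbp := hx.mul_mul_one_sub_mul_eq h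
  have hbx := hx.mul_mul_mul_eq h
  set p := 1 - (1 - a * c) * x with hp
  have hbs : a * b * s = a * c * s := by rw [← hps, ← mul_assoc, hbp, mul_assoc]
  have hvx : a * c * x = x - 1 + p := by rw [hp]; noncomm_ring
  have hxv : x * (a * c) = x - 1 + p :=
    calc x * (a * c) = x - x * (1 - a * c) := by noncomm_ring
      _ = x - 1 + p := by rw [← hx.2.1, hp]; abel
  have hzv : (x - s) * (a * c) = x - 1 := by rw [sub_mul, hxv, hsv]; abel
  have habz : a * b * (x - s) * a = (x - 1) * a := by
    rw [mul_sub, sub_mul, hbx, hbs, hvs, hvx, ← sub_mul]; abel_nf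
  have hYβ : (1 + b * (x - s) * a) * (1 - b * a) = 1 - b * s * a :=
    calc (1 + b * (x - s) * a) * (1 - b * a)
        = 1 - b * a + b * (x - s) * a - b * (x - s) * (a * b * a) := by noncomm_ring
      _ = 1 - b * a + b * (x - s) * a - b * ((x - s) * (a * c)) * a := by rw [h]; noncomm_ring
      _ = 1 - b * s * a := by rw [hzv]; noncomm_ring
  have hβY : (1 - b * a) * (1 + b * (x - s) * a) = 1 - b * s * a :=
    calc (1 - b * a) * (1 + b * (x - s) * a)
        = 1 - b * a + b * (x - s) * a - b * (a * b * (x - s) * a) := by noncomm_ring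
      _ = 1 - b * s * a := by rw [habz]; noncomm_ring
  refine ⟨1 + b * (x - s) * a, ?_, hβY.trans hYβ.symm, ?_⟩
  · symm
    calc (1 + b * (x - s) * a) * (1 - b * a) * (1 + b * (x - s) * a)
        = 1 + b * (x - s) * a - b * s * a - b * s * (a * b * (x - s) * a) := by
          rw [hYβ]; noncomm_ring
      _ = 1 + b * (x - s) * a - b * (s * x) * a := by rw [habz]; noncomm_ring
      _ = 1 + b * (x - s) * a := by rw [hsx]; noncomm_ring
  · have hw : 1 - b * a - (1 - b * a) * (1 - b * a) * (1 + b * (x - s) * a) = b * (s - p) * a :=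
      calc 1 - b * a - (1 - b * a) * (1 - b * a) * (1 + b * (x - s) * a)
          = 1 - b * a - (1 - b * a) * (1 - b * s * a) := by rw [mul_assoc, hβY]
        _ = b * s * a - b * (a * b * s * a) := by noncomm_ring
        _ = b * (s - p) * a := by rw [hbs, hvs]; noncomm_ring
    rw [hw]
    refine IsQuasinilpotent.mul_mul_of_mul_mul_mul_eq (c := c) ?_ ?_
    · rw [mul_sub (a * b), hbs, hbp, ← mul_sub]
    · convert hx.2.2 using 1
      calc (s - p) * a * c = p - p * (a * c) := by rw [mul_assoc, sub_mul, hsv]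
        _ = (1 - a * c) - (1 - a * c) * (x * (1 - a * c)) := by rw [hp]; noncomm_ring
        _ = (1 - a * c) - (1 - a * c) * (1 - a * c) * x := by rw [← hx.2.1]; noncomm_ring

end IsGDrazinInverse

theorem exists_isGDrazinInverse_smul_iff {K : Type*} [Field K] [Algebra K A] {l : K} (hl : l ≠ 0)
    {u : A} : (∃ x, IsGDrazinInverse (l • u) x) ↔ ∃ x, IsGDrazinInverse u x := by
  refine ⟨fun ⟨x, hx⟩ => ⟨l • x, ?_⟩, fun ⟨x, hx⟩ => ⟨_, hx.smul hl⟩⟩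
  simpa [smul_smul, inv_mul_cancel₀ hl] using hx.smul (inv_ne_zero hl)

theorem iff_of_mul_mul_eq {P : A → Prop}
    (hP : ∀ a b c : A, a * b * a = a * c * a → P (a * c) → P (b * a)) {a b c : A}
    (h : a * b * a = a * c * a) : P (b * a) ↔ P (a * c) :=
  ⟨fun hba => hP c a a rfl (hP a c b h.symm (hP b a a rfl hba)), hP a b c h⟩

end

theorem corach_jacobson_gDrazin_general {A : Type*} [NormedRing A] [NormedAlgebra ℂ A]
    (a b c : A) (h : a * b * a = a * c * a) (l : ℂ) :
    (∃ x : A, IsGDrazinInverse (l • (1 : A) - b * a) x) ↔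
      (∃ x : A, IsGDrazinInverse (l • (1 : A) - a * c) x) := by
  rcases eq_or_ne l 0 with rfl | hl
  · have hneg : ∀ u : A, (0 : ℂ) • (1 : A) - u = (-1 : ℂ) • u := fun u => by simp
    rw [hneg, hneg, exists_isGDrazinInverse_smul_iff (by norm_num),
      exists_isGDrazinInverse_smul_iff (by norm_num)]
    exact iff_of_mul_mul_eq (P := fun u => ∃ x, IsGDrazinInverse u x)
      (fun a b c h ⟨_, hx⟩ => ⟨_, hx.mul_of_mul_mul_eq h⟩) h
  · have hscale : ∀ u : A, l • (1 : A) - u = l • (1 - l⁻¹ • u) := fun u => by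
      rw [smul_sub, smul_smul, mul_inv_cancel₀ hl, one_smul]
    have h' : a * (l⁻¹ • b) * a = a * (l⁻¹ • c) * a := by
      simp only [mul_smul_comm, smul_mul_assoc, h]
    rw [hscale, hscale, exists_isGDrazinInverse_smul_iff hl, exists_isGDrazinInverse_smul_iff hl,
      ← smul_mul_assoc, ← mul_smul_comm]
    exact iff_of_mul_mul_eq (P := fun u => ∃ x, IsGDrazinInverse (1 - u) x)
      (fun a b c h ⟨_, hx⟩ => hx.one_sub_mul_of_mul_mul_eq h) h'

theorem corach_jacobson_gDrazin {A : Type*} [NormedRing A] [NormedAlgebra ℂ A]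
    [CompleteSpace A] (a b c : A) (h : a * b * a = a * c * a) (l : ℂ) :
    (∃ x : A, IsGDrazinInverse (l • (1 : A) - b * a) x) ↔
      (∃ x : A, IsGDrazinInverse (l • (1 : A) - a * c) x) :=
  corach_jacobson_gDrazin_general a b c h l
end

section
/- Let A be a unital complex Banach algebra and a, b, c ∈ A satisfy a(ba)² = abaca = acaba = (ac)²a (Cline-type condition). Then ba has a generalized Drazin inverse if and only if ac has a generalized Drazin inverse, and in that case (ba)^d = b((ac)^d)² a. -/
/-!
Write `p = a c` and let `x` be a generalized Drazin inverse of `p`. The hypotheses say that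
`a u a v a` does not depend on `u, v ∈ {b, c}`; in particular `a b p² = p³`, `p (a b a) = p² a`
and `(a b)(a b) a = p² a`. As `x = p² x³ = x³ p²`, the first two give `a b x = p x` and
`x (a b a) = x p a`, from which `w = b x² a` satisfies `w (b a) w = w` and
`(b a) w = w (b a) = b x a`. The residual `b a - (b a)² w` is `b e a` with `e = 1 - p x`, and its
cube is `b (p² e) a`. By Jacobson's lemma `σ(u v) \ {0} = σ(v u) \ {0}` this is quasinilpotent
because `a b (p² e) = p² (p e)` is: `p e = p - p² x` is the quasinilpotent part of `p` and commutes
with `p`. In a complex Banach algebra the quasinilpotents in the sense used here are exactly the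
elements of spectral radius `0`, and Gelfand's formula gives `r(u q) ≤ ‖u‖ r(q)` for commuting
`u, q`.

The converse is the forward implication applied three times: `b a ↦ a b` (Cline's formula,
`c = b`), `a b ↦ c a` (the hypotheses are symmetric under `b ↔ c`), and `c a ↦ a c`.
-/

open Filter ENNReal
open scoped NNReal

theorem IsQuasinilpotent.of_pow {R : Type*} [Ring R] {q : R} {n : ℕ}
    (h : IsQuasinilpotent (q ^ n)) : IsQuasinilpotent q := by
  intro y hy
  have hqy : Commute q y := hy
  -- `1 + q y = 1 - s` for `s = q (-y)` is a commuting factor of `1 - s ^ n = 1 + q ^ n (-(-y) ^ n)`.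
  have hunit : IsUnit ((1 - q * -y) * ∑ i ∈ Finset.range n, (q * -y) ^ i) := by
    rw [mul_neg_geom_sum, hqy.neg_right.mul_pow, sub_eq_add_neg, ← mul_neg]
    exact h _ (hqy.neg_right.pow_pow n n).neg_right.eq
  have hcomm : Commute (1 - q * -y) (∑ i ∈ Finset.range n, (q * -y) ^ i) :=
    Commute.sum_right _ _ _ fun i _ => (Commute.one_left _).sub_left (Commute.self_pow _ i)
  simpa using (hcomm.isUnit_mul_iff.mp hunit).1

theorem IsQuasinilpotent.spectrum_subset {𝕜 R : Type*} [Field 𝕜] [Ring R] [Algebra 𝕜 R] {q : R}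
    (h : IsQuasinilpotent q) : spectrum 𝕜 q ⊆ {0} := by
  intro z hz
  by_contra hz0
  have hfactor : algebraMap 𝕜 R z - q = (1 + q * algebraMap 𝕜 R (-z⁻¹)) * algebraMap 𝕜 R z := by
    rw [add_mul, mul_assoc, ← map_mul, neg_mul, inv_mul_cancel₀ hz0]
    simp [sub_eq_neg_add, add_comm]
  exact spectrum.mem_iff.mp hz (hfactor ▸ (h _ (Algebra.commutes _ _).symm).mul
    ((isUnit_iff_ne_zero.mpr hz0).map _))

theorem spectralRadius_eq_zero_iff {𝕜 R : Type*} [NormedField 𝕜] [Ring R] [Algebra 𝕜 R] {a : R} :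
    spectralRadius 𝕜 a = 0 ↔ spectrum 𝕜 a ⊆ {0} := by
  simp [spectralRadius, Set.subset_def]

namespace IsGDrazinInverse

variable {R : Type*} [Ring R] {a b p x : R}

theorem mul_mul_self (hx : IsGDrazinInverse p x) : p * (x * x) = x := by
  rw [← mul_assoc, hx.2.1, ← hx.1]

theorem mul_self_mul (hx : IsGDrazinInverse p x) : x * x * p = x := by
  rw [mul_assoc, ← hx.2.1, ← mul_assoc, ← hx.1]

theorem isIdempotentElem_mul (hx : IsGDrazinInverse p x) : IsIdempotentElem (p * x) := by
  rw [IsIdempotentElem, mul_assoc, ← mul_assoc x, ← hx.1]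

theorem mul_eq_mul_of_mul_sq_eq (hx : IsGDrazinInverse p x) {u v : R}
    (h : u * (p * p) = v * (p * p)) : u * x = v * x := by
  have hx' : p * p * (x * x * x) = x :=
    calc p * p * (x * x * x) = p * (p * (x * x) * x) := by simp only [mul_assoc]
      _ = x := by rw [hx.mul_mul_self, hx.mul_mul_self]
  rw [← hx', ← mul_assoc, h, mul_assoc]

theorem mul_eq_mul_of_mul_eq (hx : IsGDrazinInverse p x) {u v : R}
    (h : p * u = p * v) : x * u = x * v := by
  rw [← hx.mul_self_mul, mul_assoc, h, ← mul_assoc]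

theorem mul_one_sub_mul_pow_three (hx : IsGDrazinInverse p x)
    (hL : a * b * (p * p) = p * (p * p)) (hab : a * b * (a * b * a) = p * (p * a)) :
    (b * (1 - p * x) * a) ^ 3 = b * (p * p * (1 - p * x)) * a := by
  set e := 1 - p * x with he_def
  have habx : a * b * x = p * x := hx.mul_eq_mul_of_mul_sq_eq hL
  have hpe : Commute p e := (Commute.one_right p).sub_right ((Commute.refl p).mul_right hx.2.1)
  have he : e * e = e := hx.isIdempotentElem_mul.one_sub.eq
  have hepx : e * (p * x) = 0 := hx.isIdempotentElem_mul.one_sub_mul_self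
  have habpx : a * b * (p * x) = p * (p * x) :=
    calc a * b * (p * x) = a * b * x * p := by rw [hx.2.1]; simp only [mul_assoc]
      _ = p * (p * x) := by rw [habx, mul_assoc, hx.2.1]
  have habe : e * (a * b) * e = e * (a * b) :=
    calc e * (a * b) * e = e * (a * b) - e * (a * b * (p * x)) := by rw [he_def]; noncomm_ring
      _ = e * (a * b) - p * e * (p * x) := by simp only [habpx, hpe.eq, mul_assoc]
      _ = e * (a * b) := by rw [mul_assoc, hepx, mul_zero, sub_zero]
  have hababe : a * b * (a * b) * e * a = p * p * e * a :=
    calc a * b * (a * b) * e * a = a * b * (a * b * a) - a * b * (a * b * (p * x)) * a := by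
          rw [he_def]; noncomm_ring
      _ = p * (p * a) - p * (p * p) * x * a := by
          rw [hab, habpx, ← mul_assoc p p x, ← mul_assoc (a * b), hL]
      _ = p * p * e * a := by rw [he_def]; noncomm_ring
  calc (b * e * a) ^ 3 = b * (e * (a * b) * e) * (a * b) * e * a := by
        simp only [pow_succ, pow_zero, one_mul, mul_assoc]
    _ = b * e * (a * b * (a * b) * e * a) := by rw [habe]; simp only [mul_assoc]
    _ = b * (e * (p * p) * e) * a := by rw [hababe]; simp only [mul_assoc]
    _ = b * (p * p * e) * a := by rw [((hpe.mul_left hpe).symm).eq, mul_assoc (p * p), he]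

end IsGDrazinInverse

section Banach

variable {A : Type*} [NormedRing A] [NormedAlgebra ℂ A] [CompleteSpace A]

theorem Commute.spectralRadius_mul_le {a b : A} (h : Commute a b) :
    spectralRadius ℂ (a * b) ≤ ‖a‖₊ * spectralRadius ℂ b := by
  refine le_of_tendsto_of_tendsto
    (spectrum.pow_nnnorm_pow_one_div_tendsto_nhds_spectralRadius (a * b))
    (ENNReal.Tendsto.const_mul (spectrum.pow_nnnorm_pow_one_div_tendsto_nhds_spectralRadius b)
      (Or.inr coe_ne_top)) ?_
  filter_upwards [eventually_ne_atTop 0] with n hn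
  have hnorm : ‖(a * b) ^ n‖₊ ≤ ‖a‖₊ ^ n * ‖b ^ n‖₊ := by
    rw [h.mul_pow]
    exact (nnnorm_mul_le _ _).trans (mul_le_mul_left (nnnorm_pow_le' a (Nat.pos_of_ne_zero hn)) _)
  calc (‖(a * b) ^ n‖₊ : ℝ≥0∞) ^ (1 / n : ℝ)
      ≤ ((‖a‖₊ ^ n * ‖b ^ n‖₊ : ℝ≥0) : ℝ≥0∞) ^ (1 / n : ℝ) := by gcongr
    _ = ‖a‖₊ * (‖b ^ n‖₊ : ℝ≥0∞) ^ (1 / n : ℝ) := by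
        rw [coe_mul, mul_rpow_of_nonneg _ _ (by positivity), coe_pow, ← rpow_natCast, ← rpow_mul,
          mul_one_div_cancel (by exact_mod_cast hn), rpow_one]

theorem isQuasinilpotent_of_spectralRadius_eq_zero {q : A} (h : spectralRadius ℂ q = 0) :
    IsQuasinilpotent q := by
  intro y hy
  have hqy : spectralRadius ℂ (q * y) = 0 := by
    rw [hy]
    exact le_antisymm ((Commute.spectralRadius_mul_le hy.symm).trans (by simp [h])) zero_le
  have hmem : (-1 : ℂ) ∉ spectrum ℂ (q * y) := fun hmem =>
    by simpa using spectralRadius_eq_zero_iff.mp hqy hmem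
  simpa [neg_sub_left, add_comm] using (spectrum.notMem_iff.mp hmem).neg

theorem isQuasinilpotent_iff_spectrum_subset {q : A} :
    IsQuasinilpotent q ↔ spectrum ℂ q ⊆ {0} :=
  ⟨IsQuasinilpotent.spectrum_subset,
    fun h => isQuasinilpotent_of_spectralRadius_eq_zero (spectralRadius_eq_zero_iff.mpr h)⟩

theorem IsQuasinilpotent.mul_comm {a b : A} (h : IsQuasinilpotent (a * b)) :
    IsQuasinilpotent (b * a) := by
  rw [isQuasinilpotent_iff_spectrum_subset, ← Set.sdiff_eq_empty] at h ⊢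
  rwa [← spectrum.nonzero_mul_comm]

theorem Commute.isQuasinilpotent_mul_left {a q : A} (h : Commute a q)
    (hq : IsQuasinilpotent q) : IsQuasinilpotent (a * q) := by
  rw [isQuasinilpotent_iff_spectrum_subset, ← spectralRadius_eq_zero_iff] at hq ⊢
  exact le_antisymm (h.spectralRadius_mul_le.trans (by simp [hq])) zero_le

theorem IsGDrazinInverse.cline {a b p x : A} (hx : IsGDrazinInverse p x)
    (hL : a * b * (p * p) = p * (p * p)) (hR : p * (a * b * a) = p * (p * a))
    (hab : a * b * (a * b * a) = p * (p * a)) :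
    IsGDrazinInverse (b * a) (b * (x * x) * a) := by
  have habx : a * b * x = p * x := hx.mul_eq_mul_of_mul_sq_eq hL
  have hbaw : b * a * (b * (x * x) * a) = b * x * a :=
    calc b * a * (b * (x * x) * a) = b * (p * (x * x)) * a := by
          rw [← mul_assoc p, ← habx]; simp only [mul_assoc]
      _ = b * x * a := by rw [hx.mul_mul_self]
  have hwba : b * (x * x) * a * (b * a) = b * x * a :=
    calc b * (x * x) * a * (b * a) = b * (x * (x * (p * a))) := by
          rw [← hx.mul_eq_mul_of_mul_eq hR]; simp only [mul_assoc]
      _ = b * x * a := by rw [← mul_assoc x, ← mul_assoc (x * x), hx.mul_self_mul, mul_assoc]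
  refine ⟨?_, hbaw.trans hwba.symm, ?_⟩
  · calc b * (x * x) * a = b * (x * (p * x)) * x * a := by
          rw [← mul_assoc x p x, ← hx.1]; simp only [mul_assoc]
      _ = b * (x * x) * a * (b * a) * (b * (x * x) * a) := by
          rw [hwba, ← habx]; simp only [mul_assoc]
  · have hres : b * a - b * a * (b * a) * (b * (x * x) * a) = b * (1 - p * x) * a := by
      rw [mul_assoc (b * a) (b * a), hbaw,
        show b * a * (b * x * a) = b * (a * b * x) * a by simp only [mul_assoc], habx]
      noncomm_ring
    have hpq : Commute p (p - p * p * x) :=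
      (Commute.refl p).sub_right (((Commute.refl p).mul_right (Commute.refl p)).mul_right hx.2.1)
    have hswap : a * (b * (p * p * (1 - p * x))) = p * p * (p - p * p * x) := by
      rw [← mul_assoc, ← mul_assoc, hL]; noncomm_ring
    rw [hres]
    refine IsQuasinilpotent.of_pow (n := 3) ?_
    rw [hx.mul_one_sub_mul_pow_three hL hab]
    refine IsQuasinilpotent.mul_comm ?_
    rw [hswap]
    exact (hpq.mul_left hpq).isQuasinilpotent_mul_left hx.2.2

theorem IsGDrazinInverse.generalized_cline {a b c x : A}
    (h1 : a * b * a * b * a = a * b * a * c * a) (h2 : a * b * a * c * a = a * c * a * b * a)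
    (h3 : a * c * a * b * a = a * c * a * c * a) (hx : IsGDrazinInverse (a * c) x) :
    IsGDrazinInverse (b * a) (b * (x * x) * a) :=
  hx.cline (by simpa only [mul_assoc] using congrArg (· * c) (h2.trans h3))
    (by simpa only [mul_assoc] using h3) (by simpa only [mul_assoc] using h1.trans (h2.trans h3))

end Banach

theorem generalized_cline_formula {A : Type*} [NormedRing A] [NormedAlgebra ℂ A]
    [CompleteSpace A] (a b c : A)
    (h1 : a * b * a * b * a = a * b * a * c * a)
    (h2 : a * b * a * c * a = a * c * a * b * a)
    (h3 : a * c * a * b * a = a * c * a * c * a) :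
    ((∃ x : A, IsGDrazinInverse (b * a) x) ↔ (∃ x : A, IsGDrazinInverse (a * c) x)) ∧
      (∀ x : A, IsGDrazinInverse (a * c) x →
        IsGDrazinInverse (b * a) (b * (x * x) * a)) := by
  refine ⟨⟨fun ⟨y, hy⟩ => ?_, fun ⟨x, hx⟩ => ⟨_, hx.generalized_cline h1 h2 h3⟩⟩,
    fun x hx => hx.generalized_cline h1 h2 h3⟩
  have hab : IsGDrazinInverse (a * b) _ := hy.generalized_cline rfl rfl rfl
  have hca : IsGDrazinInverse (c * a) _ := hab.generalized_cline h3.symm h2.symm h1.symm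
  exact ⟨_, hca.generalized_cline rfl rfl rfl⟩
end
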